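/- arXiv:2312.07998 — 2 statements merged into one kernel-verified Lean document; each statement's English description precedes it below -/
import Mathlib

section
/- Under assumptions (A1), (A3) and (A4), with C = 1 − L_{x,y}/min(σ_x, σ_y), for every (x, y) ∈ 𝒳 × 𝒴 it holds that (C²/2)·(‖x − x*‖_x + ‖y − y*‖_y)² ≤ ‖x − x*(y)‖_x² + ‖y − y*(x)‖_y². -/
open MeasureTheory Real Set

noncomputable section

/-- We identify `ℝ^d` with the Euclidean space on `Fin d`. -/
abbrev Ed (d : ℕ) := EuclideanSpace ℝ (Fin d)

/-- `N` is a norm on `ℝ^d` (possibly different from the Euclidean one). -/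
structure IsNormFn {d : ℕ} (N : Ed d → ℝ) : Prop where
  nonneg : ∀ v, 0 ≤ N v
  triangle : ∀ v w, N (v + w) ≤ N v + N w
  smul_eq : ∀ (c : ℝ) (v : Ed d), N (c • v) = |c| * N v
  eq_zero : ∀ v, N v = 0 → v = 0

/-- The dual norm of `N`, via the Euclidean inner product pairing. -/
def dualN {d : ℕ} (N : Ed d → ℝ) (v : Ed d) : ℝ :=
  sSup {r | ∃ u : Ed d, N u ≤ 1 ∧ r = |(inner ℝ u v : ℝ)|}

/-- `f` is `σ`-strongly convex on `s` w.r.t. the norm `N`. -/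
def SCvxOn {d : ℕ} (N : Ed d → ℝ) (σ : ℝ) (s : Set (Ed d)) (f : Ed d → ℝ) : Prop :=
  ∀ x ∈ s, ∀ x' ∈ s, ∀ α : ℝ, 0 ≤ α → α ≤ 1 →
    f (α • x + (1 - α) • x') ≤
      α * f x + (1 - α) * f x' - σ * α * (1 - α) / 2 * N (x - x') ^ 2

/-- `f` is `σ`-strongly concave on `s` w.r.t. the norm `N`. -/
def SCcvOn {d : ℕ} (N : Ed d → ℝ) (σ : ℝ) (s : Set (Ed d)) (f : Ed d → ℝ) : Prop :=
  ∀ y ∈ s, ∀ y' ∈ s, ∀ α : ℝ, 0 ≤ α → α ≤ 1 →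
    α * f y + (1 - α) * f y' + σ * α * (1 - α) / 2 * N (y - y') ^ 2 ≤
      f (α • y + (1 - α) • y')

/-- `f` is `L`-Lipschitz on `s` w.r.t. the norm `N`. -/
def LipOn {d : ℕ} (N : Ed d → ℝ) (L : ℝ) (s : Set (Ed d)) (f : Ed d → ℝ) : Prop :=
  ∀ x ∈ s, ∀ x' ∈ s, |f x - f x'| ≤ L * N (x - x')

/-- `(x0, y0)` is a saddle point of `H` on `𝒳 × 𝒴`. -/
def IsSaddleOn {d : ℕ} (𝒳 𝒴 : Set (Ed d)) (H : Ed d → Ed d → ℝ) (x0 y0 : Ed d) : Prop :=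
  x0 ∈ 𝒳 ∧ y0 ∈ 𝒴 ∧ ∀ x ∈ 𝒳, ∀ y ∈ 𝒴, H x0 y ≤ H x0 y0 ∧ H x0 y0 ≤ H x y0

/-- `x0` minimizes `f` over `𝒳`. -/
def IsArgminOn' {d : ℕ} (𝒳 : Set (Ed d)) (f : Ed d → ℝ) (x0 : Ed d) : Prop :=
  x0 ∈ 𝒳 ∧ ∀ x ∈ 𝒳, f x0 ≤ f x

/-- `y0` maximizes `f` over `𝒴`. -/
def IsArgmaxOn' {d : ℕ} (𝒴 : Set (Ed d)) (f : Ed d → ℝ) (y0 : Ed d) : Prop :=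
  y0 ∈ 𝒴 ∧ ∀ y ∈ 𝒴, f y ≤ f y0

/-!
Adding the quadratic growth inequalities of the strongly convex functions `F(·, y)` and
`F(·, y')` at their minimizers bounds `σx ‖x*(y) - x*(y')‖²` by a mixed difference of `F`, which
the mean value inequality and (A3) bound by `L ‖y - y'‖ ‖x*(y) - x*(y')‖`; so `x*(·)` is
`L / σx`-Lipschitz, and likewise `y*(·)` is `L / σy`-Lipschitz. Uniqueness of minimizers gives
`x*(y*) = x*` and `y*(x*) = y*`, hence with `κ = L / min(σx, σy) ≤ 1` the triangle inequality yields
`‖x - x*‖ ≤ ‖x - x*(y)‖ + κ ‖y - y*‖` and `‖y - y*‖ ≤ ‖y - y*(x)‖ + κ ‖x - x*‖`. Adding them and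
using `(A + B)² ≤ 2 (A² + B²)` gives the claim.
-/

open Filter Topology

namespace IsNormFn

variable {d : ℕ} {N : Ed d → ℝ}

lemma map_zero (h : IsNormFn N) : N 0 = 0 := by
  simpa using h.smul_eq 0 0

lemma map_sub_rev (h : IsNormFn N) (v w : Ed d) : N (v - w) = N (w - v) := by
  rw [← neg_sub, ← neg_one_smul ℝ (w - v), h.smul_eq, abs_neg, abs_one, one_mul]

lemma sub_le_sub_add_sub (h : IsNormFn N) (u v w : Ed d) :
    N (u - w) ≤ N (u - v) + N (v - w) := by
  simpa using h.triangle (u - v) (v - w)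

lemma convexOn (h : IsNormFn N) : ConvexOn ℝ univ N :=
  ⟨convex_univ, fun v _ w _ a b ha hb _ => by
    simpa [h.smul_eq, abs_of_nonneg ha, abs_of_nonneg hb] using h.triangle (a • v) (b • w)⟩

lemma continuous (h : IsNormFn N) : Continuous N :=
  continuousOn_univ.mp (h.convexOn.continuousOn isOpen_univ)

lemma exists_pos_mul_norm_le (h : IsNormFn N) : ∃ c > 0, ∀ v, c * ‖v‖ ≤ N v := by
  rcases subsingleton_or_nontrivial (Ed d) with _ | _
  · exact ⟨1, one_pos, fun v => by simp [Subsingleton.elim v 0, h.map_zero]⟩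
  obtain ⟨u, hu, hmin⟩ := (isCompact_sphere (0 : Ed d) 1).exists_isMinOn
    (NormedSpace.sphere_nonempty.mpr zero_le_one) h.continuous.continuousOn
  have hu0 : u ≠ 0 := ne_zero_of_mem_unit_sphere ⟨u, hu⟩
  refine ⟨N u, (h.nonneg u).lt_of_ne fun hN => hu0 (h.eq_zero u hN.symm), fun v => ?_⟩
  rcases eq_or_ne v 0 with rfl | hv
  · simp [h.map_zero]
  have hv' : 0 < ‖v‖ := norm_pos_iff.mpr hv
  have hle : N u ≤ N (‖v‖⁻¹ • v) := hmin (by simp [norm_smul, hv'.ne'])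
  rwa [h.smul_eq, abs_of_pos (inv_pos.mpr hv'), le_inv_mul_iff₀ hv', mul_comm] at hle

lemma bddAbove_dualN (h : IsNormFn N) (v : Ed d) :
    BddAbove {r | ∃ u : Ed d, N u ≤ 1 ∧ r = |(inner ℝ u v : ℝ)|} := by
  obtain ⟨c, hc, hcN⟩ := h.exists_pos_mul_norm_le
  refine ⟨‖v‖ / c, ?_⟩
  rintro _ ⟨u, hu, rfl⟩
  rw [le_div_iff₀ hc]
  calc |(inner ℝ u v : ℝ)| * c ≤ ‖u‖ * ‖v‖ * c := by gcongr; exact abs_real_inner_le_norm u v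
    _ = c * ‖u‖ * ‖v‖ := by ring
    _ ≤ 1 * ‖v‖ := by gcongr; exact (hcN u).trans hu
    _ = ‖v‖ := one_mul _

lemma dualN_nonneg (h : IsNormFn N) (v : Ed d) : 0 ≤ dualN N v :=
  le_csSup (h.bddAbove_dualN v) ⟨0, by simp [h.map_zero], by simp⟩

lemma abs_inner_le_dualN_mul (h : IsNormFn N) (u v : Ed d) :
    |(inner ℝ u v : ℝ)| ≤ dualN N v * N u := by
  rcases (h.nonneg u).eq_or_lt with hu | hu
  · simp [h.eq_zero u hu.symm, h.map_zero]
  have hinv : 0 < (N u)⁻¹ := inv_pos.mpr hu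
  have hle := le_csSup (h.bddAbove_dualN v)
    ⟨(N u)⁻¹ • u, by rw [h.smul_eq, abs_of_pos hinv, inv_mul_cancel₀ hu.ne'], rfl⟩
  rwa [real_inner_smul_left, abs_mul, abs_of_pos hinv, inv_mul_le_iff₀ hu, mul_comm] at hle

lemma lipOn_of_dualN_gradient_le (h : IsNormFn N) {s : Set (Ed d)} {f : Ed d → ℝ} {C : ℝ}
    (hs : Convex ℝ s) (hf : Differentiable ℝ f) (hC : ∀ x ∈ s, dualN N (gradient f x) ≤ C) :
    LipOn N C s f := by
  intro x hx x' hx'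
  set γ : ℝ → Ed d := fun t => x' + t • (x - x')
  have hγ : ∀ t ∈ Icc (0 : ℝ) 1, γ t ∈ s := fun t ht => hs.add_smul_sub_mem hx' hx ht
  have hderiv : ∀ t, HasDerivAt (f ∘ γ) (inner ℝ (gradient f (γ t)) (x - x')) t := by
    intro t
    have hγ' : HasDerivAt γ (x - x') t := by
      simpa [γ] using ((hasDerivAt_id t).smul_const (x - x')).const_add x'
    simpa using (hf (γ t)).hasGradientAt.hasFDerivAt.comp_hasDerivAt t hγ'
  have hbound : ∀ t ∈ Icc (0 : ℝ) 1, ‖(inner ℝ (gradient f (γ t)) (x - x') : ℝ)‖ ≤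
      C * N (x - x') := fun t ht => by
    rw [Real.norm_eq_abs, real_inner_comm]
    exact (h.abs_inner_le_dualN_mul _ _).trans
      (mul_le_mul_of_nonneg_right (hC _ (hγ t ht)) (h.nonneg _))
  simpa [γ] using (convex_Icc (0 : ℝ) 1).norm_image_sub_le_of_norm_hasDerivWithin_le
    (fun t _ => (hderiv t).hasDerivWithinAt) hbound (left_mem_Icc.mpr zero_le_one)
    (right_mem_Icc.mpr zero_le_one)

lemma lipOn_sub_of_dualN_gradient_sub_le (h : IsNormFn N) {s : Set (Ed d)} {f g : Ed d → ℝ}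
    {C : ℝ} (hs : Convex ℝ s) (hf : Differentiable ℝ f) (hg : Differentiable ℝ g)
    (hC : ∀ x ∈ s, dualN N (gradient f x - gradient g x) ≤ C) :
    LipOn N C s fun x => f x - g x := by
  refine h.lipOn_of_dualN_gradient_le hs (hf.sub hg) fun x hx => ?_
  have hgrad : HasGradientAt (fun x => f x - g x) (gradient f x - gradient g x) x := by
    rw [hasGradientAt_iff_hasFDerivAt, map_sub]
    exact (hf x).hasGradientAt.hasFDerivAt.sub (hg x).hasGradientAt.hasFDerivAt
  rw [hgrad.gradient]
  exact hC x hx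

end IsNormFn

section StrongConvexity

variable {d : ℕ} {N : Ed d → ℝ} {σ K : ℝ} {s : Set (Ed d)} {f f₁ f₂ : Ed d → ℝ}
  {x₀ x₁ x₂ x : Ed d}

lemma SCcvOn.neg (hf : SCcvOn N σ s f) : SCvxOn N σ s fun y => -f y :=
  fun y hy y' hy' α hα₀ hα₁ => by linarith [hf y hy y' hy' α hα₀ hα₁]

lemma IsArgmaxOn'.neg (h : IsArgmaxOn' s f x₀) : IsArgminOn' s (fun y => -f y) x₀ :=
  ⟨h.1, fun y hy => neg_le_neg (h.2 y hy)⟩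

lemma SCvxOn.add_sq_le_of_isArgminOn' (hf : SCvxOn N σ s f) (hs : Convex ℝ s)
    (h₀ : IsArgminOn' s f x₀) (hx : x ∈ s) : f x₀ + σ / 2 * N (x - x₀) ^ 2 ≤ f x := by
  have key : ∀ α ∈ Ioo (0 : ℝ) 1, σ * (1 - α) / 2 * N (x - x₀) ^ 2 ≤ f x - f x₀ := by
    rintro α ⟨hα₀, hα₁⟩
    have hmin := h₀.2 _ (hs hx h₀.1 hα₀.le (sub_nonneg.mpr hα₁.le) (add_sub_cancel α 1))
    have hcvx := hf x hx x₀ h₀.1 α hα₀.le hα₁.le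
    refine le_of_mul_le_mul_left ?_ hα₀
    linear_combination hcvx + hmin
  have hlim : Tendsto (fun α : ℝ => σ * (1 - α) / 2 * N (x - x₀) ^ 2) (𝓝[>] 0)
      (𝓝 (σ / 2 * N (x - x₀) ^ 2)) := by
    have hcont : Continuous fun α : ℝ => σ * (1 - α) / 2 * N (x - x₀) ^ 2 := by fun_prop
    simpa using hcont.continuousWithinAt.tendsto (x := 0) (s := Ioi 0)
  linarith [le_of_tendsto hlim (eventually_of_mem (Ioo_mem_nhdsGT zero_lt_one) key)]

lemma SCcvOn.add_sq_le_of_isArgmaxOn' (hf : SCcvOn N σ s f) (hs : Convex ℝ s)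
    (h₀ : IsArgmaxOn' s f x₀) (hx : x ∈ s) : f x + σ / 2 * N (x - x₀) ^ 2 ≤ f x₀ := by
  linarith [hf.neg.add_sq_le_of_isArgminOn' hs h₀.neg hx]

lemma SCvxOn.eq_of_isArgminOn' (hN : IsNormFn N) (hσ : 0 < σ) (hf : SCvxOn N σ s f)
    (hs : Convex ℝ s) (h₀ : IsArgminOn' s f x₀) (hx : x ∈ s) (hle : f x ≤ f x₀) : x = x₀ := by
  have hgrowth := hf.add_sq_le_of_isArgminOn' hs h₀ hx
  have hsq : N (x - x₀) ^ 2 ≤ 0 := by nlinarith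
  exact sub_eq_zero.mp (hN.eq_zero _ (pow_eq_zero_iff two_ne_zero |>.mp
    (le_antisymm hsq (sq_nonneg _))))

lemma SCcvOn.eq_of_isArgmaxOn' (hN : IsNormFn N) (hσ : 0 < σ) (hf : SCcvOn N σ s f)
    (hs : Convex ℝ s) (h₀ : IsArgmaxOn' s f x₀) (hx : x ∈ s) (hle : f x₀ ≤ f x) : x = x₀ :=
  hf.neg.eq_of_isArgminOn' hN hσ hs h₀.neg hx (neg_le_neg hle)

lemma SCvxOn.mul_sub_le_of_isArgminOn' (hN : IsNormFn N) (hs : Convex ℝ s)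
    (hf₁ : SCvxOn N σ s f₁) (hf₂ : SCvxOn N σ s f₂) (h₁ : IsArgminOn' s f₁ x₁)
    (h₂ : IsArgminOn' s f₂ x₂) (hlip : LipOn N K s fun x => f₁ x - f₂ x) (hK : 0 ≤ K) :
    σ * N (x₁ - x₂) ≤ K := by
  have g₁ := hf₁.add_sq_le_of_isArgminOn' hs h₁ h₂.1
  have g₂ := hf₂.add_sq_le_of_isArgminOn' hs h₂ h₁.1
  have hl := (abs_le.mp (hlip x₂ h₂.1 x₁ h₁.1)).2
  rw [hN.map_sub_rev x₂ x₁] at g₁ hl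
  have hsq : σ * N (x₁ - x₂) ^ 2 ≤ K * N (x₁ - x₂) := by linarith
  rcases (hN.nonneg (x₁ - x₂)).eq_or_lt with hu | hu
  · rwa [← hu, mul_zero]
  · exact le_of_mul_le_mul_right (by linarith) hu

lemma SCcvOn.mul_sub_le_of_isArgmaxOn' (hN : IsNormFn N) (hs : Convex ℝ s)
    (hf₁ : SCcvOn N σ s f₁) (hf₂ : SCcvOn N σ s f₂) (h₁ : IsArgmaxOn' s f₁ x₁)
    (h₂ : IsArgmaxOn' s f₂ x₂) (hlip : LipOn N K s fun x => f₁ x - f₂ x) (hK : 0 ≤ K) :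
    σ * N (x₁ - x₂) ≤ K :=
  hf₁.neg.mul_sub_le_of_isArgminOn' hN hs hf₂.neg h₁.neg h₂.neg
    (fun x hx x' hx' => by rw [← abs_neg]; convert hlip x hx x' hx' using 2; ring) hK

end StrongConvexity

lemma one_sub_sq_div_two_mul_sq_le {a b A B κ : ℝ} (hκ : κ ≤ 1) (ha : 0 ≤ a) (hb : 0 ≤ b)
    (haA : a ≤ A + κ * b) (hbB : b ≤ B + κ * a) :
    (1 - κ) ^ 2 / 2 * (a + b) ^ 2 ≤ A ^ 2 + B ^ 2 := by
  have hsum : (1 - κ) * (a + b) ≤ A + B := by linarith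
  have hnn : 0 ≤ (1 - κ) * (a + b) := mul_nonneg (by linarith) (by linarith)
  nlinarith [pow_le_pow_left₀ hnn hsum 2, sq_nonneg (A - B)]

lemma le_div_mul_of_mul_le {m σ u L b : ℝ} (hm : 0 < m) (hmσ : m ≤ σ) (hu : 0 ≤ u)
    (h : σ * u ≤ L * b) : u ≤ L / m * b := by
  rw [div_mul_eq_mul_div, le_div_iff₀ hm]
  nlinarith

section SaddleFunction

variable {d : ℕ} {F : Ed d → Ed d → ℝ} {𝒳 𝒴 : Set (Ed d)} {nx ny : Ed d → ℝ} {σ L : ℝ}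

lemma mul_argmin_sub_le (hXcvx : Convex ℝ 𝒳) (hnx : IsNormFn nx)
    (hdiffx : ∀ y, Differentiable ℝ fun x => F x y) (hA1x : ∀ y ∈ 𝒴, SCvxOn nx σ 𝒳 fun x => F x y)
    (hA3x : ∀ x ∈ 𝒳, ∀ y ∈ 𝒴, ∀ y' ∈ 𝒴,
      dualN nx (gradient (fun x' => F x' y) x - gradient (fun x' => F x' y') x)
        ≤ L * ny (y - y'))
    {xstar : Ed d → Ed d} (hxstar : ∀ y ∈ 𝒴, IsArgminOn' 𝒳 (fun x => F x y) (xstar y))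
    {y y' : Ed d} (hy : y ∈ 𝒴) (hy' : y' ∈ 𝒴) :
    σ * nx (xstar y - xstar y') ≤ L * ny (y - y') :=
  (hA1x y hy).mul_sub_le_of_isArgminOn' hnx hXcvx (hA1x y' hy') (hxstar y hy) (hxstar y' hy')
    (hnx.lipOn_sub_of_dualN_gradient_sub_le hXcvx (hdiffx y) (hdiffx y')
      fun x hx => hA3x x hx y hy y' hy')
    ((hnx.dualN_nonneg _).trans (hA3x _ (hxstar y hy).1 y hy y' hy'))

lemma mul_argmax_sub_le (hYcvx : Convex ℝ 𝒴) (hny : IsNormFn ny)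
    (hdiffy : ∀ x, Differentiable ℝ fun y => F x y) (hA1y : ∀ x ∈ 𝒳, SCcvOn ny σ 𝒴 fun y => F x y)
    (hA3y : ∀ y ∈ 𝒴, ∀ x ∈ 𝒳, ∀ x' ∈ 𝒳,
      dualN ny (gradient (fun y' => F x y') y - gradient (fun y' => F x' y') y)
        ≤ L * nx (x - x'))
    {ystar : Ed d → Ed d} (hystar : ∀ x ∈ 𝒳, IsArgmaxOn' 𝒴 (fun y => F x y) (ystar x))
    {x x' : Ed d} (hx : x ∈ 𝒳) (hx' : x' ∈ 𝒳) :
    σ * ny (ystar x - ystar x') ≤ L * nx (x - x') :=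
  (hA1y x hx).mul_sub_le_of_isArgmaxOn' hny hYcvx (hA1y x' hx') (hystar x hx) (hystar x' hx')
    (hny.lipOn_sub_of_dualN_gradient_sub_le hYcvx (hdiffy x) (hdiffy x')
      fun y hy => hA3y y hy x hx x' hx')
    ((hny.dualN_nonneg _).trans (hA3y _ (hystar x hx).1 x hx x' hx'))

end SaddleFunction

theorem localization_penalty_lower_bound_general {d : ℕ} (F : Ed d → Ed d → ℝ)
    (𝒳 𝒴 : Set (Ed d))
    (hXcvx : Convex ℝ 𝒳)
    (hYcvx : Convex ℝ 𝒴)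
    (nx ny : Ed d → ℝ) (hnx : IsNormFn nx) (hny : IsNormFn ny)
    (σx σy Lxy : ℝ) (hσx : 0 < σx) (hσy : 0 < σy)
    (hdiffx : ∀ y, Differentiable ℝ fun x => F x y)
    (hdiffy : ∀ x, Differentiable ℝ fun y => F x y)
    (hA1x : ∀ y ∈ 𝒴, SCvxOn nx σx 𝒳 fun x => F x y)
    (hA1y : ∀ x ∈ 𝒳, SCcvOn ny σy 𝒴 fun y => F x y)
    (hA3x : ∀ x ∈ 𝒳, ∀ y ∈ 𝒴, ∀ y' ∈ 𝒴,
      dualN nx (gradient (fun x' => F x' y) x - gradient (fun x' => F x' y') x)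
        ≤ Lxy * ny (y - y'))
    (hA3y : ∀ y ∈ 𝒴, ∀ x ∈ 𝒳, ∀ x' ∈ 𝒳,
      dualN ny (gradient (fun y' => F x y') y - gradient (fun y' => F x' y') y)
        ≤ Lxy * nx (x - x'))
    (xstar ystar : Ed d → Ed d)
    (hxstar : ∀ y ∈ 𝒴, IsArgminOn' 𝒳 (fun x => F x y) (xstar y))
    (hystar : ∀ x ∈ 𝒳, IsArgmaxOn' 𝒴 (fun y => F x y) (ystar x))
    (hA4 : Lxy ≤ min σx σy)
    (xs ys : Ed d) (hsaddle : IsSaddleOn 𝒳 𝒴 F xs ys) :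
    ∀ x ∈ 𝒳, ∀ y ∈ 𝒴,
      (1 - Lxy / min σx σy) ^ 2 / 2 * (nx (x - xs) + ny (y - ys)) ^ 2 ≤
        nx (x - xstar y) ^ 2 + ny (y - ystar x) ^ 2 := by
  intro x hx y hy
  obtain ⟨hxs, hys, hsaddle⟩ := hsaddle
  have hm : 0 < min σx σy := lt_min hσx hσy
  have hxstar_ys : xs = xstar ys := (hA1x ys hys).eq_of_isArgminOn' hnx hσx hXcvx
    (hxstar ys hys) hxs (hsaddle _ (hxstar ys hys).1 ys hys).2
  have hystar_xs : ys = ystar xs := (hA1y xs hxs).eq_of_isArgmaxOn' hny hσy hYcvx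
    (hystar xs hxs) hys (hsaddle xs hxs _ (hystar xs hxs).1).1
  have hκx : nx (xstar y - xs) ≤ Lxy / min σx σy * ny (y - ys) := by
    refine le_div_mul_of_mul_le hm (min_le_left σx σy) (hnx.nonneg _) ?_
    rw [hxstar_ys]
    exact mul_argmin_sub_le hXcvx hnx hdiffx hA1x hA3x hxstar hy hys
  have hκy : ny (ystar x - ys) ≤ Lxy / min σx σy * nx (x - xs) := by
    refine le_div_mul_of_mul_le hm (min_le_right σx σy) (hny.nonneg _) ?_
    rw [hystar_xs]
    exact mul_argmax_sub_le hYcvx hny hdiffy hA1y hA3y hystar hx hxs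
  exact one_sub_sq_div_two_mul_sq_le ((div_le_one hm).mpr hA4) (hnx.nonneg _) (hny.nonneg _)
    (by linarith [hnx.sub_le_sub_add_sub x (xstar y) xs])
    (by linarith [hny.sub_le_sub_add_sub y (ystar x) ys])

/-- Inequality (20): localization relative to the saddle point `(x*, y*)` is
controlled by the distances to `x*(y)` and `y*(x)`. -/
theorem localization_penalty_lower_bound {d : ℕ} (F : Ed d → Ed d → ℝ)
    (𝒳 𝒴 : Set (Ed d))
    (hXcvx : Convex ℝ 𝒳) (hXcpt : IsCompact 𝒳) (hXne : 𝒳.Nonempty)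
    (hYcvx : Convex ℝ 𝒴) (hYcpt : IsCompact 𝒴) (hYne : 𝒴.Nonempty)
    (nx ny : Ed d → ℝ) (hnx : IsNormFn nx) (hny : IsNormFn ny)
    (σx σy Lxy : ℝ) (hσx : 0 < σx) (hσy : 0 < σy)
    (hdiffx : ∀ y, Differentiable ℝ fun x => F x y)
    (hdiffy : ∀ x, Differentiable ℝ fun y => F x y)
    (hA1x : ∀ y ∈ 𝒴, SCvxOn nx σx 𝒳 fun x => F x y)
    (hA1y : ∀ x ∈ 𝒳, SCcvOn ny σy 𝒴 fun y => F x y)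
    (hA3x : ∀ x ∈ 𝒳, ∀ y ∈ 𝒴, ∀ y' ∈ 𝒴,
      dualN nx (gradient (fun x' => F x' y) x - gradient (fun x' => F x' y') x)
        ≤ Lxy * ny (y - y'))
    (hA3y : ∀ y ∈ 𝒴, ∀ x ∈ 𝒳, ∀ x' ∈ 𝒳,
      dualN ny (gradient (fun y' => F x y') y - gradient (fun y' => F x' y') y)
        ≤ Lxy * nx (x - x'))
    (xstar ystar : Ed d → Ed d)
    (hxstar : ∀ y ∈ 𝒴, IsArgminOn' 𝒳 (fun x => F x y) (xstar y))
    (hystar : ∀ x ∈ 𝒳, IsArgmaxOn' 𝒴 (fun y => F x y) (ystar x))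
    (hA4 : Lxy ≤ min σx σy)
    (xs ys : Ed d) (hsaddle : IsSaddleOn 𝒳 𝒴 F xs ys) :
    ∀ x ∈ 𝒳, ∀ y ∈ 𝒴,
      (1 - Lxy / min σx σy) ^ 2 / 2 * (nx (x - xs) + ny (y - ys)) ^ 2 ≤
        nx (x - xstar y) ^ 2 + ny (y - ystar x) ^ 2 :=
  localization_penalty_lower_bound_general F 𝒳 𝒴 hXcvx hYcvx nx ny hnx hny σx σy Lxy hσx hσy hdiffx
    hdiffy hA1x hA1y hA3x hA3y xstar ystar hxstar hystar hA4 xs ys hsaddle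
end
end

section
/- For any λ > 0, the negative-entropy function V(x) = λ·∑_{i=1}^d x_i·log(x_i) is λ-strongly convex with respect to the ℓ₁ norm on the probability simplex {x ∈ ℝ^d : x_i ≥ 0 for all i, ∑_{i=1}^d x_i = 1}; that is, for all x, x′ in the simplex and all α ∈ [0,1]: V(αx + (1−α)x′) ≤ α·V(x) + (1−α)·V(x′) − (λ·α·(1−α)/2)·‖x − x′‖₁². -/
/-!
Write `m = α x + (1 - α) x'`. The convexity gap `α V(x) + (1 - α) V(x') - V(m)` equals
`λ (α KL(x ‖ m) + (1 - α) KL(x' ‖ m))`. By Pinsker's inequality `KL(p ‖ q) ≥ ‖p - q‖₁² / 2`, and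
since `‖x - m‖₁ = (1 - α) ‖x - x'‖₁` and `‖x' - m‖₁ = α ‖x - x'‖₁`, the gap is at least
`λ α (1 - α) ‖x - x'‖₁² / 2`. Pinsker's inequality in turn follows from the pointwise bound
`t log t - t + 1 ≥ 3 (t - 1)² / (2 (t + 2))` and the Cauchy–Schwarz inequality.
-/

open Real Set InformationTheory Finset

lemma hasDerivAt_three_mul_sq_div {t : ℝ} (ht : t + 2 ≠ 0) :
    HasDerivAt (fun s => 3 * (s - 1) ^ 2 / (2 * (s + 2))) (3 / 2 * (1 - 9 / (t + 2) ^ 2)) t := by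
  refine ((((hasDerivAt_id' t).sub_const 1).fun_pow 2 |>.const_mul 3).fun_div
    (((hasDerivAt_id' t).add_const 2).const_mul 2) (mul_ne_zero two_ne_zero ht)).congr_deriv ?_
  field_simp
  ring

lemma hasDerivAt_three_div_two_mul_one_sub_div_sq {t : ℝ} (ht : t + 2 ≠ 0) :
    HasDerivAt (fun s => 3 / 2 * (1 - 9 / (s + 2) ^ 2)) (27 / (t + 2) ^ 3) t := by
  refine ((hasDerivAt_const t (9 : ℝ)).fun_div (((hasDerivAt_id' t).add_const 2).fun_pow 2)
    (pow_ne_zero 2 ht) |>.const_sub 1 |>.const_mul (3 / 2)).congr_deriv ?_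
  field_simp
  ring

lemma three_mul_sq_div_le_klFun {t : ℝ} (ht : 0 ≤ t) :
    3 * (t - 1) ^ 2 / (2 * (t + 2)) ≤ klFun t := by
  set g : ℝ → ℝ := fun s => klFun s - 3 * (s - 1) ^ 2 / (2 * (s + 2))
  set g' : ℝ → ℝ := fun s => log s - 3 / 2 * (1 - 9 / (s + 2) ^ 2)
  have hg (s : ℝ) (hs : 0 < s) : HasDerivAt g (g' s) s :=
    (hasDerivAt_klFun hs.ne').sub (hasDerivAt_three_mul_sq_div (by positivity))
  have hg' (s : ℝ) (hs : 0 < s) : HasDerivAt g' (s⁻¹ - 27 / (s + 2) ^ 3) s :=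
    (hasDerivAt_log hs.ne').sub (hasDerivAt_three_div_two_mul_one_sub_div_sq (by positivity))
  have hconvex : ConvexOn ℝ (Ici 0) g := by
    refine convexOn_of_hasDerivWithinAt2_nonneg (convex_Ici 0) ?_ (f' := g')
      (f'' := fun s => s⁻¹ - 27 / (s + 2) ^ 3) ?_ ?_ ?_
    · exact continuous_klFun.continuousOn.sub <|
        ContinuousOn.div (by fun_prop) (by fun_prop) fun s hs => by simp at hs; positivity
    all_goals simp only [interior_Ici, Set.mem_Ioi]; intro s hs
    · exact (hg s hs).hasDerivWithinAt
    · exact (hg' s hs).hasDerivWithinAt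
    · -- `(s + 2) ^ 3 - 27 s = (s - 1) ^ 2 (s + 8)`
      rw [sub_nonneg, div_le_iff₀ (by positivity), inv_mul_eq_div, le_div_iff₀ hs]
      nlinarith [sq_nonneg (s - 1)]
  have hmin : IsMinOn g (Ici 0) 1 := by
    refine hconvex.isMinOn_of_rightDeriv_eq_zero (by simp) ?_
    rw [(hg 1 one_pos).hasDerivWithinAt.derivWithin (uniqueDiffWithinAt_Ioi 1)]
    norm_num [g']
  simpa [g, klFun_one] using hmin ht

lemma sub_add_three_mul_sq_div_le {a b : ℝ} (ha : 0 ≤ a) (hb : 0 < b) :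
    a - b + 3 * (a - b) ^ 2 / (2 * (a + 2 * b)) ≤ a * log a - a * log b := by
  have hlog : a * log (a / b) = a * log a - a * log b := by
    rcases ha.eq_or_lt with rfl | ha
    · simp
    · rw [log_div ha.ne' hb.ne', mul_sub]
  calc a - b + 3 * (a - b) ^ 2 / (2 * (a + 2 * b))
      = a - b + b * (3 * (a / b - 1) ^ 2 / (2 * (a / b + 2))) := by field_simp
    _ ≤ a - b + b * klFun (a / b) := by
      gcongr
      exact three_mul_sq_div_le_klFun (div_nonneg ha hb.le)
    _ = a * log a - a * log b := by
      rw [klFun_apply, ← hlog]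
      field_simp
      ring

section Simplex

variable {ι : Type*} [Fintype ι]

noncomputable def relEntropy (p q : ι → ℝ) : ℝ := ∑ i, (p i * log (p i) - p i * log (q i))

lemma sq_sum_abs_sub_le_mul_sum_sq_div {p q : ι → ℝ} (hp : ∀ i, 0 ≤ p i) (hq : ∀ i, 0 ≤ q i) :
    (∑ i, |p i - q i|) ^ 2 ≤
      (∑ i, (p i - q i) ^ 2 / (p i + 2 * q i)) * ∑ i, (p i + 2 * q i) := by
  have hpq (i : ι) : 0 ≤ p i + 2 * q i := by linarith [hp i, hq i]
  refine sum_sq_le_sum_mul_sum_of_sq_le_mul _ (fun i _ => div_nonneg (sq_nonneg _) (hpq i))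
    (fun i _ => hpq i) fun i _ => ?_
  rcases (hpq i).eq_or_lt with h | h
  · obtain ⟨hpi, hqi⟩ : p i = 0 ∧ q i = 0 := by constructor <;> linarith [hp i, hq i]
    simp [hpi, hqi]
  · rw [sq_abs, div_mul_cancel₀ _ h.ne']

/-- **Pinsker's inequality**. -/
theorem sq_sum_abs_sub_div_two_le_relEntropy {p q : ι → ℝ} (hp : p ∈ stdSimplex ℝ ι)
    (hq : q ∈ stdSimplex ℝ ι) (hpq : ∀ i, q i = 0 → p i = 0) :
    (∑ i, |p i - q i|) ^ 2 / 2 ≤ relEntropy p q := by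
  have hterm (i : ι) : p i - q i + 3 / 2 * ((p i - q i) ^ 2 / (p i + 2 * q i)) ≤
      p i * log (p i) - p i * log (q i) := by
    rcases (hq.1 i).eq_or_lt with h | h
    · simp [hpq i h.symm, ← h]
    · simpa only [mul_div_mul_comm] using sub_add_three_mul_sq_div_le (hp.1 i) h
  have hsum := sum_le_sum (s := univ) fun i _ => hterm i
  have hcs := sq_sum_abs_sub_le_mul_sum_sq_div hp.1 hq.1
  rw [sum_add_distrib, ← mul_sum, hp.2, hq.2] at hcs
  rw [sum_add_distrib, sum_sub_distrib, ← mul_sum, hp.2, hq.2] at hsum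
  rw [relEntropy]
  linarith

lemma sum_abs_sub_smul_add_smul (x x' : ι → ℝ) {α : ℝ} (hα : α ≤ 1) :
    ∑ i, |x i - (α • x + (1 - α) • x') i| = (1 - α) * ∑ i, |x i - x' i| := by
  rw [mul_sum]
  refine sum_congr rfl fun i _ => ?_
  have hxm : x i - (α • x + (1 - α) • x') i = (1 - α) * (x i - x' i) := by
    simp only [Pi.add_apply, Pi.smul_apply, smul_eq_mul]
    ring
  rw [hxm, abs_mul, abs_of_nonneg (sub_nonneg.2 hα)]

lemma sq_mul_sum_abs_sub_div_two_le_relEntropy_smul_add_smul {x x' : ι → ℝ}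
    (hx : x ∈ stdSimplex ℝ ι) (hx' : x' ∈ stdSimplex ℝ ι) {α : ℝ} (hα₀ : 0 < α) (hα₁ : α ≤ 1) :
    ((1 - α) * ∑ i, |x i - x' i|) ^ 2 / 2 ≤ relEntropy x (α • x + (1 - α) • x') := by
  have hm := convex_stdSimplex ℝ ι hx hx' hα₀.le (sub_nonneg.2 hα₁) (add_sub_cancel α 1)
  rw [← sum_abs_sub_smul_add_smul x x' hα₁]
  refine sq_sum_abs_sub_div_two_le_relEntropy hx hm fun i hi => ?_
  have := (add_eq_zero_iff_of_nonneg (mul_nonneg hα₀.le (hx.1 i))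
    (mul_nonneg (sub_nonneg.2 hα₁) (hx'.1 i))).1 hi
  exact (mul_eq_zero.1 this.1).resolve_left hα₀.ne'

lemma sum_mul_log_gap_eq_relEntropy (x x' : ι → ℝ) (α : ℝ) :
    α * ∑ i, x i * log (x i) + (1 - α) * ∑ i, x' i * log (x' i) -
        ∑ i, (α • x + (1 - α) • x') i * log ((α • x + (1 - α) • x') i) =
      α * relEntropy x (α • x + (1 - α) • x') + (1 - α) * relEntropy x' (α • x + (1 - α) • x') := by
  simp only [relEntropy, mul_sum, ← sum_sub_distrib, ← sum_add_distrib]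
  refine sum_congr rfl fun i _ => ?_
  simp only [Pi.add_apply, Pi.smul_apply, smul_eq_mul]
  ring

end Simplex

/-- The negative-entropy function `V(x) = λ ∑ᵢ xᵢ log xᵢ` is `λ`-strongly convex
w.r.t. the `ℓ₁` norm on the probability simplex. -/
theorem entropy_strongly_convex_on_simplex {d : ℕ} (lam : ℝ) (hlam : 0 < lam) :
    ∀ x x' : Fin d → ℝ,
      ((∀ i, 0 ≤ x i) ∧ ∑ i, x i = 1) →
      ((∀ i, 0 ≤ x' i) ∧ ∑ i, x' i = 1) →
      ∀ α : ℝ, 0 ≤ α → α ≤ 1 →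
        lam * ∑ i, (α * x i + (1 - α) * x' i) * Real.log (α * x i + (1 - α) * x' i)
          ≤ α * (lam * ∑ i, x i * Real.log (x i))
            + (1 - α) * (lam * ∑ i, x' i * Real.log (x' i))
            - lam * α * (1 - α) / 2 * (∑ i, |x i - x' i|) ^ 2 := by
  intro x x' hx hx' α hα₀ hα₁
  rcases hα₀.eq_or_lt with rfl | hα₀
  · simp
  rcases hα₁.eq_or_lt with rfl | hα₁
  · simp
  set m := α • x + (1 - α) • x'
  have hleft := sq_mul_sum_abs_sub_div_two_le_relEntropy_smul_add_smul hx hx' hα₀ hα₁.le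
  have hright := sq_mul_sum_abs_sub_div_two_le_relEntropy_smul_add_smul hx' hx
    (sub_pos.2 hα₁) (sub_le_self 1 hα₀.le)
  simp only [sub_sub_cancel, abs_sub_comm (x' _)] at hright
  rw [add_comm] at hright
  set T := ∑ i, |x i - x' i|
  have hgap : α * (1 - α) / 2 * T ^ 2 ≤
      α * ∑ i, x i * log (x i) + (1 - α) * ∑ i, x' i * log (x' i) - ∑ i, m i * log (m i) :=
    calc α * (1 - α) / 2 * T ^ 2
        = α * (((1 - α) * T) ^ 2 / 2) + (1 - α) * ((α * T) ^ 2 / 2) := by ring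
      _ ≤ α * relEntropy x m + (1 - α) * relEntropy x' m := by gcongr
      _ = _ := (sum_mul_log_gap_eq_relEntropy x x' α).symm
  have := mul_le_mul_of_nonneg_left hgap hlam.le
  simp only [m, Pi.add_apply, Pi.smul_apply, smul_eq_mul] at this
  linarith
end
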